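/- If φ : M_n(ℂ) → M_k(ℂ) is a completely positive trace-preserving linear map, then φ is a contraction up to a constant with respect to the Hilbert–Schmidt norms: for all X ∈ M_n(ℂ), ‖φ(X)‖₂² ≤ ‖φ(1)‖ · ‖X‖₂², where ‖·‖₂ is the Frobenius norm and ‖φ(1)‖ is the operator norm of φ(1). -/

import Mathlib

open Matrix
open scoped ComplexOrder

noncomputable section

/-- The positive square root of a positive semidefinite matrix, as defined in the older Mathlib
(`Matrix.PosSemidef.sqrt`, since removed). -/
def Matrix.PosSemidef.sqrt {n : Type*} [Fintype n] [DecidableEq n] {𝕜 : Type*} [RCLike 𝕜]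
    {A : Matrix n n 𝕜} (hA : A.PosSemidef) : Matrix n n 𝕜 :=
  hA.1.eigenvectorUnitary.1 * diagonal ((↑) ∘ (√·) ∘ hA.1.eigenvalues) *
  (star hA.1.eigenvectorUnitary : Matrix n n 𝕜)

theorem Matrix.PosSemidef.posSemidef_sqrt {n : Type*} [Fintype n] [DecidableEq n] {𝕜 : Type*}
    [RCLike 𝕜] {A : Matrix n n 𝕜} (hA : A.PosSemidef) : hA.sqrt.PosSemidef := by
  have hd : (diagonal ((↑) ∘ (√·) ∘ hA.1.eigenvalues) : Matrix n n 𝕜).PosSemidef :=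
    PosSemidef.diagonal (fun i => RCLike.ofReal_nonneg.mpr (Real.sqrt_nonneg _))
  simpa [Matrix.PosSemidef.sqrt, star_eq_conjTranspose] using
    hd.mul_mul_conjTranspose_same (hA.1.eigenvectorUnitary : Matrix n n 𝕜)

abbrev Mat (n : ℕ) := Matrix (Fin n) (Fin n) ℂ

/-- Apply `φ` entrywise to the `n × n` blocks of an `m·n × m·n` matrix. -/
def blockApply {n k : ℕ} (φ : Mat n →ₗ[ℂ] Mat k) (m : ℕ)
    (M : Matrix (Fin m × Fin n) (Fin m × Fin n) ℂ) :
    Matrix (Fin m × Fin k) (Fin m × Fin k) ℂ :=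
  Matrix.of fun p q => φ (Matrix.of fun a b => M (p.1, a) (q.1, b)) p.2 q.2

/-- Complete positivity of a linear map between matrix algebras. -/
def IsCP {n k : ℕ} (φ : Mat n →ₗ[ℂ] Mat k) : Prop :=
  ∀ (m : ℕ) (M : Matrix (Fin m × Fin n) (Fin m × Fin n) ℂ),
    M.PosSemidef → (blockApply φ m M).PosSemidef

/-- Trace preservation. -/
def IsTP {n k : ℕ} (φ : Mat n →ₗ[ℂ] Mat k) : Prop :=
  ∀ X : Mat n, (φ X).trace = X.trace

/-- The Hilbert–Schmidt adjoint of `φ`, characterized by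
`tr (hsAdj φ A * Xᴴ) = tr (A * (φ X)ᴴ)` for all `X`. -/
def hsAdj {n k : ℕ} (φ : Mat n →ₗ[ℂ] Mat k) (A : Mat k) : Mat n :=
  Matrix.of fun i j => (A * (φ (Matrix.single i j 1))ᴴ).trace

/-- The trace norm `tr |X| = tr ((Xᴴ X)^{1/2})`. -/
def traceNorm {n : ℕ} (X : Mat n) : ℝ :=
  ((Matrix.posSemidef_conjTranspose_mul_self X).sqrt.trace).re


/-- The positive square root of a positive definite matrix. -/
def sqrtPD {n : ℕ} {B : Mat n} (hB : B.PosDef) : Mat n := hB.posSemidef.sqrt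

/-- `B^{-1/2}` for a positive definite `B`. -/
def invSqrtPD {n : ℕ} {B : Mat n} (hB : B.PosDef) : Mat n := (sqrtPD hB)⁻¹

/-- `B^{-1/4}` for a positive definite `B`. -/
def invFourthPD {n : ℕ} {B : Mat n} (hB : B.PosDef) : Mat n :=
  (hB.posSemidef.posSemidef_sqrt.sqrt)⁻¹

/-- The sandwiched 2-Rényi quasi-relative entropy functional
`S₂(A|B) = tr ((B^{-1/4} A B^{-1/4})²)`. -/
def S2 {n : ℕ} (A : Mat n) {B : Mat n} (hB : B.PosDef) : ℝ :=
  (((invFourthPD hB * A * invFourthPD hB) ^ 2).trace).re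

/-- The squared Araki–Masuda weighted 2-norm `‖X‖²_{B,2}`. -/
def wNormSq {n : ℕ} (X : Mat n) {B : Mat n} (hB : B.PosDef) : ℝ :=
  (((invFourthPD hB * X * invFourthPD hB)ᴴ * (invFourthPD hB * X * invFourthPD hB)).trace).re

/-- The Petz recovery map `Y ↦ B^{1/2} φ*(φ(B)^{-1/2} Y φ(B)^{-1/2}) B^{1/2}`. -/
def petz {n k : ℕ} (φ : Mat n →ₗ[ℂ] Mat k) {B : Mat n} (hB : B.PosDef)
    (hφB : (φ B).PosDef) (Y : Mat k) : Mat n :=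
  sqrtPD hB * hsAdj φ (invSqrtPD hφB * Y * invSqrtPD hφB) * sqrtPD hB

/-- Squared Frobenius (Hilbert–Schmidt) norm. -/
def frobSq {n : ℕ} (X : Mat n) : ℝ := ((Xᴴ * X).trace).re

lemma trace_nonneg' {m : Type*} [Fintype m] [DecidableEq m] {M : Matrix m m ℂ}
    (hM : M.PosSemidef) : 0 ≤ M.trace := by
  have h : ∀ i, 0 ≤ M i i := by
    intro i
    have := hM.dotProduct_mulVec_nonneg (Pi.single i 1)
    simpa [dotProduct, Matrix.mulVec, Pi.single_apply, apply_ite,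
      Finset.mul_sum, mul_comm] using this
  exact Finset.sum_nonneg fun i _ => h i

lemma trace_fromBlocks' {m l : Type*} [Fintype m] [Fintype l]
    (A : Matrix m m ℂ) (B : Matrix m l ℂ) (C : Matrix l m ℂ) (D : Matrix l l ℂ) :
    (Matrix.fromBlocks A B C D).trace = A.trace + D.trace := by
  simp [Matrix.trace, Fintype.sum_sum_type, Matrix.fromBlocks, Matrix.diag]

lemma psd_smul_one_sub {k : ℕ} {C : Mat k} (hC : C.PosSemidef) :
    (((‖Matrix.toEuclideanCLM (𝕜 := ℂ) C‖ : ℝ) : ℂ) • (1 : Mat k) - C).PosSemidef := by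
  set c : ℝ := ‖Matrix.toEuclideanCLM (𝕜 := ℂ) C‖ with hc
  refine Matrix.PosSemidef.of_dotProduct_mulVec_nonneg ?_ ?_
  · have hCh := hC.isHermitian
    simp [Matrix.IsHermitian, Matrix.conjTranspose_sub, Matrix.conjTranspose_smul,
      Complex.star_def, Complex.conj_ofReal, hCh.eq]
  · intro x
    have hq : star x ⬝ᵥ ((((c : ℂ) • (1 : Mat k) - C)) *ᵥ x)
        = (c : ℂ) * (star x ⬝ᵥ x) - star x ⬝ᵥ (C *ᵥ x) := by
      simp [Matrix.sub_mulVec, Matrix.smul_mulVec, dotProduct_sub,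
        dotProduct_smul, smul_eq_mul]
    rw [hq]
    -- q := star x ⬝ᵥ (C *ᵥ x) is a nonneg real ≤ c * ‖x‖²
    have hq0 : 0 ≤ star x ⬝ᵥ (C *ᵥ x) := hC.dotProduct_mulVec_nonneg x
    set y : EuclideanSpace ℂ (Fin k) := (WithLp.equiv 2 _).symm x with hy
    have hinner : (inner ℂ y ((Matrix.toEuclideanCLM (𝕜 := ℂ) C) y) : ℂ)
        = star x ⬝ᵥ (C *ᵥ x) := by
      rw [hy, WithLp.equiv_symm_apply, Matrix.toEuclideanCLM_toLp, EuclideanSpace.inner_toLp_toLp,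
        dotProduct_comm]
    have hnorm : ‖(inner ℂ y ((Matrix.toEuclideanCLM (𝕜 := ℂ) C) y) : ℂ)‖
        ≤ c * ‖y‖ ^ 2 := by
      calc ‖(inner ℂ y ((Matrix.toEuclideanCLM (𝕜 := ℂ) C) y) : ℂ)‖
          ≤ ‖y‖ * ‖(Matrix.toEuclideanCLM (𝕜 := ℂ) C) y‖ := norm_inner_le_norm _ _
        _ ≤ ‖y‖ * (c * ‖y‖) := by
            gcongr
            exact (Matrix.toEuclideanCLM (𝕜 := ℂ) C).le_opNorm y
        _ = c * ‖y‖ ^ 2 := by ring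
    have hxx : star x ⬝ᵥ x = ((‖y‖ ^ 2 : ℝ) : ℂ) := by
      rw [dotProduct_comm, ← EuclideanSpace.inner_toLp_toLp x x, ← WithLp.equiv_symm_apply, ← hy]
      exact_mod_cast (inner_self_eq_norm_sq_to_K (𝕜 := ℂ) y).trans (by norm_cast)
    -- now conclude
    have hqre : star x ⬝ᵥ (C *ᵥ x) = (((star x ⬝ᵥ (C *ᵥ x)).re : ℝ) : ℂ) := by
      obtain ⟨h1, h2⟩ := Complex.nonneg_iff.mp hq0
      exact (Complex.re_add_im _).symm.trans (by rw [← h2]; simp)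
    rw [hxx, hqre]
    rw [← Complex.ofReal_mul, ← Complex.ofReal_sub, Complex.zero_le_real, sub_nonneg]
    have : (star x ⬝ᵥ (C *ᵥ x)).re ≤ ‖(inner ℂ y ((Matrix.toEuclideanCLM (𝕜 := ℂ) C) y) : ℂ)‖ := by
      rw [hinner]
      exact Complex.re_le_norm _
    linarith [hnorm]

theorem hs_bound_of_cptp {n k : ℕ} (φ : Mat n →ₗ[ℂ] Mat k)
    (hCP : IsCP φ) (hTP : IsTP φ) (X : Mat n) :
    frobSq (φ X) ≤ ‖Matrix.toEuclideanCLM (𝕜 := ℂ) (φ 1)‖ * frobSq X := by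
  set c : ℝ := ‖Matrix.toEuclideanCLM (𝕜 := ℂ) (φ 1)‖ with hcdef
  rcases Nat.eq_zero_or_pos n with hn | hn
  · subst hn
    have hX : X = 0 := Subsingleton.elim _ _
    simp [hX, frobSq]
  -- now n ≥ 1, so φ 1 ≠ 0 and c > 0
  have hφ1ne : φ (1 : Mat n) ≠ 0 := by
    intro h
    have := hTP 1
    rw [h] at this
    simp only [Matrix.trace_zero, Matrix.trace_one] at this
    have hn0 : (n : ℂ) = 0 := by simpa using this.symm
    have : n = 0 := by exact_mod_cast hn0
    omega
  have hc : 0 < c := by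
    rw [hcdef, norm_pos_iff]
    simpa using hφ1ne
  have hcne : c ≠ 0 := ne_of_gt hc
  -- the 2x2 block matrix
  set W : Matrix (Fin n) (Fin 2 × Fin n) ℂ :=
    Matrix.of (fun l pj => if pj.1 = 0 then X l pj.2 else (1 : Mat n) l pj.2) with hW
  set M : Matrix (Fin 2 × Fin n) (Fin 2 × Fin n) ℂ := Wᴴ * W with hMdef
  have hM : M.PosSemidef := Matrix.posSemidef_conjTranspose_mul_self W
  have hN : (blockApply φ 2 M).PosSemidef := hCP 2 M hM
  set A : Mat k := φ (Xᴴ * X) with hA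
  set B : Mat k := φ X with hB
  set C : Mat k := φ 1 with hC
  set f : Fin k ⊕ Fin k → Fin 2 × Fin k :=
    Sum.elim (fun p => ((0 : Fin 2), p)) (fun p => ((1 : Fin 2), p)) with hf
  have hblock : ∀ (a b : Fin 2), (Matrix.of fun i j => M ((a, i)) ((b, j)))
      = (if a = 0 then Xᴴ else 1) * (if b = 0 then X else 1) := by
    intro a b
    ext i j
    simp only [hMdef, hW, Matrix.of_apply, Matrix.mul_apply, Matrix.conjTranspose_apply]
    by_cases h1 : a = 0 <;> by_cases h2 : b = 0 <;>
      simp only [h1, h2, if_true, if_false, if_pos, if_neg, Matrix.of_apply] <;>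
      simp [Matrix.mul_apply, Matrix.conjTranspose_apply, Matrix.one_apply, apply_ite,
        Finset.sum_ite_eq, Finset.sum_ite_eq']
    by_cases h3 : i = j <;> simp [h3]
    exact fun h => h3 h.symm
  set D : Mat k := φ Xᴴ with hD
  have hN' : ((blockApply φ 2 M).submatrix f f).PosSemidef := hN.submatrix f
  have hNblk : (blockApply φ 2 M).submatrix f f = Matrix.fromBlocks A D B C := by
    ext i j
    cases i <;> cases j <;>
      simp [hf, blockApply, Matrix.submatrix_apply, Matrix.fromBlocks, hblock, hA, hB, hC, hD]
  rw [hNblk] at hN'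
  have hDB : D = Bᴴ := by
    ext p q
    have h := hN'.isHermitian.apply (Sum.inl p) (Sum.inr q)
    simpa [Matrix.fromBlocks, Matrix.conjTranspose_apply] using h.symm
  rw [hDB] at hN'
  -- C is PSD
  have hCps : C.PosSemidef := by
    have h := hN'.submatrix (Sum.inr : Fin k → Fin k ⊕ Fin k)
    have : (Matrix.fromBlocks A Bᴴ B C).submatrix (Sum.inr : Fin k → Fin k ⊕ Fin k) Sum.inr = C := by
      ext p q; simp [Matrix.fromBlocks]
    rwa [this] at h
  -- the sandwich matrix
  set S : Mat k := -(((c⁻¹ : ℝ) : ℂ)) • B with hS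
  set T : Matrix (Fin k ⊕ Fin k) (Fin k ⊕ Fin k) ℂ := Matrix.fromBlocks 1 0 S 0 with hT
  have hPSD : (Tᴴ * Matrix.fromBlocks A Bᴴ B C * T).PosSemidef :=
    hN'.conjTranspose_mul_mul_same T
  have htr := trace_nonneg' hPSD
  have hTprod : Tᴴ * Matrix.fromBlocks A Bᴴ B C * T
      = Matrix.fromBlocks (A + Sᴴ * B + (Bᴴ * S + Sᴴ * (C * S))) 0 0 0 := by
    rw [hT, Matrix.fromBlocks_conjTranspose, Matrix.fromBlocks_multiply,
      Matrix.fromBlocks_multiply]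
    congr 1 <;> simp [Matrix.mul_add, Matrix.add_mul, Matrix.mul_assoc] <;> abel
  rw [hTprod, trace_fromBlocks'] at htr
  -- compute the trace
  have hSh : Sᴴ = -(((c⁻¹ : ℝ) : ℂ)) • Bᴴ := by
    rw [hS]; simp [Matrix.conjTranspose_smul, Complex.star_def, Complex.conj_ofReal]
  have htr2 : 0 ≤ A.trace - ((c⁻¹ : ℝ) : ℂ) * (Bᴴ * B).trace - ((c⁻¹ : ℝ) : ℂ) * (Bᴴ * B).trace
      + ((c⁻¹ : ℝ) : ℂ) * (((c⁻¹ : ℝ) : ℂ) * (Bᴴ * (C * B)).trace) := by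
    convert htr using 1
    rw [hS, hSh]
    simp [Matrix.trace_add, Matrix.trace_smul, Matrix.mul_smul, Matrix.smul_mul,
      smul_eq_mul, Matrix.trace_mul_comm B Bᴴ]
    ring
  -- second inequality : tr(Bᴴ (c•1 - C) B) ≥ 0
  have hsub := trace_nonneg' ((psd_smul_one_sub hCps).conjTranspose_mul_mul_same B)
  have htr3 : 0 ≤ (c : ℂ) * (Bᴴ * B).trace - (Bᴴ * (C * B)).trace := by
    convert hsub using 1
    rw [← hcdef]
    simp [Matrix.mul_sub, Matrix.sub_mul, Matrix.trace_sub, Matrix.mul_smul, Matrix.smul_mul,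
      Matrix.trace_smul, smul_eq_mul, Matrix.mul_assoc]
  -- move to ℝ
  set a : ℝ := A.trace.re with ha
  set t : ℝ := ((Bᴴ * B).trace).re with ht
  set u : ℝ := ((Bᴴ * (C * B)).trace).re with hu
  have h1 : 0 ≤ a - c⁻¹ * t - c⁻¹ * t + c⁻¹ * (c⁻¹ * u) := by
    have := (Complex.nonneg_iff.mp htr2).1
    simpa [Complex.sub_re, Complex.add_re, Complex.re_ofReal_mul] using this
  have h2 : 0 ≤ c * t - u := by
    have := (Complex.nonneg_iff.mp htr3).1
    simpa [Complex.sub_re, Complex.re_ofReal_mul] using this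
  have key3 : c⁻¹ * (c⁻¹ * u) ≤ c⁻¹ * t := by
    have h2' : u ≤ c * t := by linarith
    have := mul_le_mul_of_nonneg_left h2' (inv_nonneg.mpr hc.le)
    rw [inv_mul_cancel_left₀ hcne] at this
    exact mul_le_mul_of_nonneg_left this (inv_nonneg.mpr hc.le)
  have key4 : c⁻¹ * t ≤ a := by linarith
  have final : t ≤ c * a := by
    have := mul_le_mul_of_nonneg_left key4 hc.le
    rwa [mul_inv_cancel_left₀ hcne] at this
  -- conclude
  have hgoal1 : frobSq (φ X) = t := rfl
  have hgoal2 : a = frobSq X := by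
    rw [ha, hA, frobSq, hTP (Xᴴ * X)]
  rw [hgoal1, ← hgoal2]
  exact final
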